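/- arXiv:2205.08364 — 4 statements merged into one kernel-verified Lean document; each statement's English description precedes it below -/
import Mathlib

section
/- For the central-client weighting matrix W = [0, (M−1)^{-1}𝟏ᵀ_{M−1}; 𝟏_{M−1}, 0] and block-diagonal Δ* = diag(Δ^{(1)},...,Δ^{(M)}) with p×p blocks, every eigenvalue λ of Δ*(W ⊗ I_p) satisfies: there exists a nonzero vector ν₁ ∈ C^p with (M−1)^{-1} Δ^{(1)} (Σ_{k=2}^M Δ^{(k)}) ν₁ = λ² ν₁, or λ = 0. -/
/-- For the central-client weighting matrix `W = [0, (M−1)⁻¹𝟏ᵀ; 𝟏, 0]` and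
block-diagonal `Δ* = diag(Δ^{(1)},…,Δ^{(M)})` with `p×p` blocks, every eigenvalue `λ`
of `Δ*(W ⊗ I_p)` satisfies: either `λ = 0`, or there exists a nonzero `ν₁ ∈ ℂ^p` with
`(M−1)⁻¹ Δ^{(1)} (∑_{k=2}^M Δ^{(k)}) ν₁ = λ² ν₁`. -/
theorem stmt9 (M p : ℕ) (hM : 2 ≤ M)
    (Δ : Fin M → Matrix (Fin p) (Fin p) ℝ)
    (W : Matrix (Fin M) (Fin M) ℝ)
    (hW : ∀ i j : Fin M,
      W i j = if i.val = 0 ∧ j.val ≠ 0 then ((M : ℝ) - 1)⁻¹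
              else if i.val ≠ 0 ∧ j.val = 0 then 1 else 0)
    (Δstar : Matrix (Fin M × Fin p) (Fin M × Fin p) ℝ)
    (hΔstar : ∀ m i m' i', Δstar (m, i) (m', i') = if m = m' then Δ m i i' else 0)
    (Wk : Matrix (Fin M × Fin p) (Fin M × Fin p) ℝ)
    (hWk : ∀ m i m' i', Wk (m, i) (m', i') = if i = i' then W m m' else 0) :
    ∀ lam ∈ spectrum ℂ ((Δstar * Wk).map (Complex.ofReal)),
      lam = 0 ∨
      ∃ ν : Fin p → ℂ, ν ≠ 0 ∧
        (((M : ℂ) - 1)⁻¹ •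
          ((Δ ⟨0, by omega⟩).map (Complex.ofReal) *
            ∑ k ∈ Finset.univ.filter (fun k : Fin M => k.val ≠ 0),
              (Δ k).map (Complex.ofReal))).mulVec ν
          = lam ^ 2 • ν := by
  intro lam hlam
  by_cases hl0 : lam = 0
  · exact Or.inl hl0
  right
  set A := (Δstar * Wk).map (Complex.ofReal) with hAdef
  have hnu : ¬ IsUnit (algebraMap ℂ (Matrix (Fin M × Fin p) (Fin M × Fin p) ℂ) lam - A) :=
    spectrum.mem_iff.mp hlam
  have hdet : (algebraMap ℂ (Matrix (Fin M × Fin p) (Fin M × Fin p) ℂ) lam - A).det = 0 := by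
    by_contra h
    exact hnu ((Matrix.isUnit_iff_isUnit_det _).mpr (isUnit_iff_ne_zero.mpr h))
  obtain ⟨v, hvne, hv⟩ := Matrix.exists_mulVec_eq_zero_iff.mpr hdet
  have heig : A.mulVec v = lam • v := by
    rw [Matrix.sub_mulVec] at hv
    have h1 : (algebraMap ℂ (Matrix (Fin M × Fin p) (Fin M × Fin p) ℂ) lam).mulVec v = lam • v := by
      funext x
      simp [Matrix.algebraMap_eq_diagonal, Matrix.mulVec_diagonal]
    rw [h1] at hv
    exact (sub_eq_zero.mp hv).symm
  have hz' : (0 : ℕ) < M := by omega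
  set z : Fin M := ⟨0, hz'⟩ with hzdef
  -- entries of Δstar * Wk
  have hmul : ∀ (m : Fin M) (i : Fin p) (m' : Fin M) (i' : Fin p),
      (Δstar * Wk) (m, i) (m', i') = Δ m i i' * W m m' := by
    intro m i m' i'
    rw [Matrix.mul_apply, Fintype.sum_prod_type]
    simp [hΔstar, hWk, ite_mul, mul_ite, Finset.sum_ite_eq, Finset.sum_ite_eq']
  -- componentwise eigen equation
  have hcomp : ∀ (m : Fin M) (i : Fin p),
      ∑ m' : Fin M, ∑ i' : Fin p, ((Δ m i i' : ℝ) : ℂ) * ((W m m' : ℝ) : ℂ) * v (m', i')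
        = lam * v (m, i) := by
    intro m i
    have h := congrFun heig (m, i)
    simp only [Matrix.mulVec, dotProduct, Matrix.map_apply, Fintype.sum_prod_type,
      Pi.smul_apply, smul_eq_mul, hAdef, hmul, Complex.ofReal_mul] at h
    exact h
  set v0 : Fin p → ℂ := fun i => v (z, i) with hv0def
  set s : Fin p → ℂ := fun i => ∑ m ∈ Finset.univ.filter (fun m : Fin M => m.val ≠ 0), v (m, i)
    with hsdef
  set c : ℂ := ((M : ℂ) - 1)⁻¹ with hcdef
  have hcast : ((((M : ℝ) - 1)⁻¹ : ℝ) : ℂ) = c := by push_cast; rfl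
  -- equation at block 0
  have E0 : ∀ i : Fin p, c * ∑ i' : Fin p, ((Δ z i i' : ℝ) : ℂ) * s i' = lam * v0 i := by
    intro i
    have h := hcomp z i
    rw [Finset.sum_comm] at h
    have hrw : ∀ i' : Fin p,
        ∑ m' : Fin M, ((Δ z i i' : ℝ) : ℂ) * ((W z m' : ℝ) : ℂ) * v (m', i')
          = ((Δ z i i' : ℝ) : ℂ) * (c * s i') := by
      intro i'
      have h2 : ∀ m' : Fin M, ((Δ z i i' : ℝ) : ℂ) * ((W z m' : ℝ) : ℂ) * v (m', i')
          = if m'.val ≠ 0 then ((Δ z i i' : ℝ) : ℂ) * (c * v (m', i')) else 0 := by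
        intro m'
        rw [hW]
        by_cases hm : m'.val = 0 <;> simp [hm, hzdef, hcast, mul_comm, mul_left_comm]
        ring
      rw [Finset.sum_congr rfl (fun m' _ => h2 m'), Finset.sum_ite, Finset.sum_const_zero,
        add_zero, hsdef]
      simp [Finset.mul_sum]
    rw [Finset.sum_congr rfl (fun i' _ => hrw i')] at h
    rw [← h, Finset.mul_sum]
    exact Finset.sum_congr rfl fun i' _ => by ring
  -- equations at nonzero blocks
  have Em : ∀ m : Fin M, m.val ≠ 0 → ∀ i : Fin p,
      ∑ i' : Fin p, ((Δ m i i' : ℝ) : ℂ) * v0 i' = lam * v (m, i) := by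
    intro m hm i
    have h := hcomp m i
    have hrw : ∀ m' : Fin M,
        ∑ i' : Fin p, ((Δ m i i' : ℝ) : ℂ) * ((W m m' : ℝ) : ℂ) * v (m', i')
          = if m' = z then ∑ i' : Fin p, ((Δ m i i' : ℝ) : ℂ) * v0 i' else 0 := by
      intro m'
      by_cases hm' : m' = z
      · subst hm'
        simp [hW, hm, hzdef, hv0def]
      · have hne : m'.val ≠ 0 := by
          intro h0; exact hm' (Fin.ext h0)
        simp [hW, hm, hne, hm']
    rw [Finset.sum_congr rfl (fun m' _ => hrw m'), Finset.sum_ite_eq' Finset.univ z] at h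
    simpa using h
  -- v0 is nonzero
  have hv0ne : v0 ≠ 0 := by
    intro h0
    apply hvne
    funext x
    obtain ⟨m, i⟩ := x
    by_cases hm : m.val = 0
    · have : m = z := Fin.ext hm
      subst this
      exact congrFun h0 i
    · have h := Em m hm i
      rw [h0] at h
      simp at h
      exact h.resolve_left hl0
  refine ⟨v0, hv0ne, ?_⟩
  funext i
  have hS : ∀ j i' : Fin p,
      ((∑ k ∈ Finset.univ.filter (fun k : Fin M => k.val ≠ 0), (Δ k).map (Complex.ofReal)) j i')
        = ∑ k ∈ Finset.univ.filter (fun k : Fin M => k.val ≠ 0), ((Δ k j i' : ℝ) : ℂ) := by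
    intro j i'
    simp [Matrix.sum_apply]
  have hstep : ∀ j : Fin p,
      ∑ i' : Fin p,
        ((∑ k ∈ Finset.univ.filter (fun k : Fin M => k.val ≠ 0), (Δ k).map (Complex.ofReal)) j i')
          * v0 i'
        = ∑ k ∈ Finset.univ.filter (fun k : Fin M => k.val ≠ 0),
            ∑ i' : Fin p, ((Δ k j i' : ℝ) : ℂ) * v0 i' := by
    intro j
    simp only [hS, Finset.sum_mul]
    exact Finset.sum_comm
  have expand : (((Δ z).map (Complex.ofReal) *
        ∑ k ∈ Finset.univ.filter (fun k : Fin M => k.val ≠ 0),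
          (Δ k).map (Complex.ofReal)).mulVec v0) i
      = ∑ j : Fin p, ((Δ z i j : ℝ) : ℂ) *
          ∑ i' : Fin p,
            ((∑ k ∈ Finset.univ.filter (fun k : Fin M => k.val ≠ 0),
              (Δ k).map (Complex.ofReal)) j i') * v0 i' := by
    rw [Matrix.mulVec, dotProduct]
    simp only [Matrix.mul_apply, Finset.sum_mul]
    rw [Finset.sum_comm]
    refine Finset.sum_congr rfl fun j _ => ?_
    rw [Finset.mul_sum]
    refine Finset.sum_congr rfl fun i' _ => ?_
    rw [Matrix.map_apply]
    ring
  have key : c * ∑ j : Fin p, ((Δ z i j : ℝ) : ℂ) *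
      (∑ k ∈ Finset.univ.filter (fun k : Fin M => k.val ≠ 0),
        ∑ i' : Fin p, ((Δ k j i' : ℝ) : ℂ) * v0 i')
      = lam ^ 2 * v0 i := by
    have h1 : ∀ j : Fin p,
        (∑ k ∈ Finset.univ.filter (fun k : Fin M => k.val ≠ 0),
          ∑ i' : Fin p, ((Δ k j i' : ℝ) : ℂ) * v0 i') = lam * s j := by
      intro j
      rw [hsdef, Finset.mul_sum]
      exact Finset.sum_congr rfl fun k hk => Em k (Finset.mem_filter.mp hk).2 j
    calc c * ∑ j : Fin p, ((Δ z i j : ℝ) : ℂ) *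
          (∑ k ∈ Finset.univ.filter (fun k : Fin M => k.val ≠ 0),
            ∑ i' : Fin p, ((Δ k j i' : ℝ) : ℂ) * v0 i')
        = c * ∑ j : Fin p, ((Δ z i j : ℝ) : ℂ) * (lam * s j) := by
          rw [Finset.sum_congr rfl fun j _ => by rw [h1 j]]
      _ = lam * (c * ∑ j : Fin p, ((Δ z i j : ℝ) : ℂ) * s j) := by
          rw [Finset.mul_sum, Finset.mul_sum, Finset.mul_sum]
          exact Finset.sum_congr rfl fun j _ => by ring
      _ = lam * (lam * v0 i) := by rw [E0 i]
      _ = lam ^ 2 * v0 i := by ring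
  show (c • ((Δ z).map Complex.ofReal *
      ∑ k ∈ Finset.univ.filter (fun k : Fin M => k.val ≠ 0),
        (Δ k).map (Complex.ofReal))).mulVec v0 i = (lam ^ 2 • v0) i
  rw [Matrix.smul_mulVec]
  simp only [Pi.smul_apply, smul_eq_mul]
  rw [expand]
  rw [Finset.sum_congr rfl fun j _ => by rw [hstep j]]
  exact key
end

section
/- Let Σ̂_{xx} ∈ R^{p×p} be symmetric positive definite and let Σ^{(m)}, m=1,...,M be symmetric positive semidefinite with M^{-1}Σ_m Σ^{(m)} = Σ̂_{xx}. Then for all sufficiently small α > 0, the spectral radius of Π_{m=1}^M (I_p − αΣ^{(m)}) is strictly less than 1. -/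
open Matrix
open scoped Matrix.Norms.L2Operator InnerProductSpace

namespace Stmt12Aux

lemma numstep (K α nR p3 : ℝ) (hK : 1 ≤ K) (hα : 0 ≤ α) (hαK : α * K ≤ 1)
    (h3 : 1 ≤ p3) (hn : 0 ≤ nR) :
    α ^ 2 * (K * (nR * K)) + (1 + α * K) * (α ^ 2 * K ^ 2 * nR * p3)
      ≤ α ^ 2 * K ^ 2 * (nR + 1) * (3 * p3) := by
  set t := α ^ 2 * K ^ 2 * nR with htdef
  have ht : 0 ≤ t := by rw [htdef]; positivity
  have hp3 : 0 ≤ p3 := le_trans zero_le_one h3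
  have htp : 0 ≤ t * p3 := mul_nonneg ht hp3
  have f1 : t ≤ t * p3 := le_mul_of_one_le_right ht h3
  have f2 : (1 + α * K) * (t * p3) ≤ 2 * (t * p3) :=
    mul_le_mul_of_nonneg_right (by linarith) htp
  have e1 : α ^ 2 * (K * (nR * K)) = t := by rw [htdef]; ring
  have e3 : α ^ 2 * K ^ 2 * nR * p3 = t * p3 := by rw [htdef]
  have e2 : α ^ 2 * K ^ 2 * (nR + 1) * (3 * p3) = 3 * (t * p3) + α ^ 2 * K ^ 2 * (3 * p3) := by
    rw [htdef]; ring
  have f3 : 0 ≤ α ^ 2 * K ^ 2 * (3 * p3) := by positivity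
  linarith

lemma norm_list_sum_le' (p : ℕ) (K : ℝ) :
    ∀ L : List (Matrix (Fin p) (Fin p) ℂ), (∀ T ∈ L, ‖T‖ ≤ K) → ‖L.sum‖ ≤ L.length * K := by
  intro L
  induction L with
  | nil => simp
  | cons a l ih =>
    intro h
    simp only [List.sum_cons, List.length_cons]
    calc ‖a + l.sum‖ ≤ ‖a‖ + ‖l.sum‖ := norm_add_le _ _
      _ ≤ K + l.length * K := by
          gcongr
          · exact h a (by simp)
          · exact ih fun T hT => h T (by simp [hT])
      _ ≤ (↑(l.length + 1) : ℝ) * K := by push_cast; ring_nf; exact le_refl _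

lemma expand (p : ℕ) (K α : ℝ) (hK : 1 ≤ K) (hα : 0 ≤ α) (hαK : α * K ≤ 1) :
    ∀ L : List (Matrix (Fin p) (Fin p) ℂ), (∀ T ∈ L, ‖T‖ ≤ K) →
      ‖(L.map (fun T => 1 - (α : ℂ) • T)).prod - (1 - (α : ℂ) • L.sum)‖
        ≤ α ^ 2 * K ^ 2 * L.length * 3 ^ L.length := by
  intro L
  induction L with
  | nil => simp
  | cons T L' ih =>
    intro h
    have hT : ‖T‖ ≤ K := h T (by simp)
    have hL' := ih fun x hx => h x (by simp [hx])
    have hWn : ‖L'.sum‖ ≤ L'.length * K := norm_list_sum_le' p K L' fun x hx => h x (by simp [hx])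
    set a : ℂ := (α : ℂ) with ha
    set Q := (L'.map (fun T => 1 - a • T)).prod with hQ
    set W := L'.sum with hW
    have key : (1 - a • T) * Q - (1 - a • (T + W))
        = (a * a) • (T * W) + (1 - a • T) * (Q - (1 - a • W)) := by
      simp only [mul_sub, sub_mul, one_mul, mul_one, smul_mul_assoc, mul_smul_comm, smul_smul,
        smul_add, smul_sub]
      module
    have hnorm_a : ‖a‖ = α := by
      rw [ha, Complex.norm_real, Real.norm_eq_abs, abs_of_nonneg hα]
    have h1 : ‖(1 : Matrix (Fin p) (Fin p) ℂ)‖ ≤ 1 := by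
      rw [Matrix.cstar_norm_def, _root_.map_one]
      exact ContinuousLinearMap.norm_id_le
    have hfac : ‖1 - a • T‖ ≤ 1 + α * K := by
      calc ‖1 - a • T‖ ≤ ‖(1 : Matrix (Fin p) (Fin p) ℂ)‖ + ‖a • T‖ := norm_sub_le _ _
        _ ≤ 1 + α * K := by
            rw [norm_smul, hnorm_a]
            gcongr
    have htw : ‖(a * a) • (T * W)‖ ≤ α ^ 2 * (K * (L'.length * K)) := by
      rw [norm_smul, norm_mul, hnorm_a]
      calc α * α * ‖T * W‖ ≤ α * α * (‖T‖ * ‖W‖) := by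
            have h2 := norm_mul_le T W
            have : 0 ≤ α * α := mul_nonneg hα hα
            nlinarith
        _ ≤ α * α * (K * (↑L'.length * K)) := by gcongr
        _ = α ^ 2 * (K * (↑L'.length * K)) := by ring
    have hprod : ‖(1 - a • T) * (Q - (1 - a • W))‖
        ≤ (1 + α * K) * (α ^ 2 * K ^ 2 * L'.length * 3 ^ L'.length) := by
      calc ‖(1 - a • T) * (Q - (1 - a • W))‖ ≤ ‖1 - a • T‖ * ‖Q - (1 - a • W)‖ :=
            norm_mul_le _ _
        _ ≤ (1 + α * K) * (α ^ 2 * K ^ 2 * L'.length * 3 ^ L'.length) := by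
            apply mul_le_mul hfac hL' (norm_nonneg _)
            positivity
    simp only [List.map_cons, List.prod_cons, List.sum_cons, List.length_cons]
    rw [← hQ, ← hW, key]
    calc ‖(a * a) • (T * W) + (1 - a • T) * (Q - (1 - a • W))‖
        ≤ ‖(a * a) • (T * W)‖ + ‖(1 - a • T) * (Q - (1 - a • W))‖ := norm_add_le _ _
      _ ≤ α ^ 2 * (K * (L'.length * K))
            + (1 + α * K) * (α ^ 2 * K ^ 2 * L'.length * 3 ^ L'.length) :=
          add_le_add htw hprod
      _ ≤ α ^ 2 * K ^ 2 * (↑L'.length + 1) * (3 * 3 ^ L'.length) :=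
          numstep K α L'.length (3 ^ L'.length) hK hα hαK
            (by calc (1:ℝ) = 1 ^ L'.length := (one_pow _).symm
                  _ ≤ 3 ^ L'.length := by gcongr; norm_num) (Nat.cast_nonneg _)
      _ = α ^ 2 * K ^ 2 * (↑(L'.length + 1)) * 3 ^ (L'.length + 1) := by
          rw [pow_succ]
          push_cast
          ring

lemma re_quad (p : ℕ) (A : Matrix (Fin p) (Fin p) ℝ) (x : Fin p → ℂ) :
    (dotProduct (star x) ((A.map Complex.ofReal) *ᵥ x)).re
      = (fun i => (x i).re) ⬝ᵥ (A *ᵥ fun i => (x i).re)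
        + (fun i => (x i).im) ⬝ᵥ (A *ᵥ fun i => (x i).im) := by
  simp only [dotProduct, Matrix.mulVec, Pi.star_apply, Complex.re_sum,
    Finset.mul_sum, Matrix.map_apply]
  rw [← Finset.sum_add_distrib]
  refine Finset.sum_congr rfl fun i _ => ?_
  simp only [Complex.re_sum, ← Finset.sum_add_distrib]
  refine Finset.sum_congr rfl fun j _ => ?_
  simp [Complex.mul_re, Complex.mul_im]

end Stmt12Aux

namespace Stmt12Aux

lemma coercive (p : ℕ) (hp : 0 < p) (A : Matrix (Fin p) (Fin p) ℝ)
    (hpos : ∀ u : Fin p → ℝ, u ≠ 0 → 0 < u ⬝ᵥ (A *ᵥ u))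
    (hnn : ∀ u : Fin p → ℝ, 0 ≤ u ⬝ᵥ (A *ᵥ u)) :
    ∃ c > 0, ∀ x : EuclideanSpace ℂ (Fin p),
      c * ‖x‖ ^ 2 ≤ (⟪x, (Matrix.toEuclideanCLM (𝕜 := ℂ) (A.map Complex.ofReal)) x⟫_ℂ).re := by
  haveI : Nonempty (Fin p) := ⟨⟨0, hp⟩⟩
  set TB := Matrix.toEuclideanCLM (𝕜 := ℂ) (A.map Complex.ofReal) with hTB
  set g : EuclideanSpace ℂ (Fin p) → ℝ := fun x => (⟪x, TB x⟫_ℂ).re with hg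
  have req : ∀ x : EuclideanSpace ℂ (Fin p),
      g x = (fun i => ((WithLp.equiv 2 _ x) i).re) ⬝ᵥ (A *ᵥ fun i => ((WithLp.equiv 2 _ x) i).re)
        + (fun i => ((WithLp.equiv 2 _ x) i).im) ⬝ᵥ (A *ᵥ fun i => ((WithLp.equiv 2 _ x) i).im) := by
    intro x
    rw [hg]
    simp only
    rw [EuclideanSpace.inner_eq_star_dotProduct]
    rw [dotProduct_comm, show (TB x).ofLp = (A.map Complex.ofReal) *ᵥ (WithLp.equiv 2 _ x) by
      rw [hTB, Matrix.ofLp_toEuclideanCLM]; rfl]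
    exact re_quad p A _
  have hgpos : ∀ x : EuclideanSpace ℂ (Fin p), x ≠ 0 → 0 < g x := by
    intro x hx
    set u : Fin p → ℝ := fun i => ((WithLp.equiv 2 _ x) i).re with hu
    set v : Fin p → ℝ := fun i => ((WithLp.equiv 2 _ x) i).im with hv
    have huv : u ≠ 0 ∨ v ≠ 0 := by
      by_contra hcon
      push_neg at hcon
      apply hx
      ext i
      have h1 : u i = 0 := by rw [hcon.1]; rfl
      have h2 : v i = 0 := by rw [hcon.2]; rfl
      exact Complex.ext h1 h2
    rw [req x, ← hu, ← hv]
    rcases huv with h | h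
    · have := hpos u h
      have := hnn v
      linarith
    · have := hpos v h
      have := hnn u
      linarith
  have hgcont : Continuous g := by
    apply Complex.continuous_re.comp
    exact Continuous.inner continuous_id TB.continuous
  obtain ⟨x₀, hx₀mem, hx₀min⟩ :=
    (isCompact_sphere (0 : EuclideanSpace ℂ (Fin p)) 1).exists_isMinOn
      (NormedSpace.sphere_nonempty.mpr zero_le_one) hgcont.continuousOn
  have hx₀norm : ‖x₀‖ = 1 := by simpa using hx₀mem
  have hx₀ne : x₀ ≠ 0 := by
    intro h
    rw [h] at hx₀norm
    simp at hx₀norm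
  refine ⟨g x₀, hgpos x₀ hx₀ne, fun x => ?_⟩
  rcases eq_or_ne x 0 with rfl | hx
  · simp [hg]
  · set r : ℝ := ‖x‖ with hr
    have hr0 : 0 < r := norm_pos_iff.mpr hx
    set y : EuclideanSpace ℂ (Fin p) := r⁻¹ • x with hy
    have hyn : ‖y‖ = 1 := by
      rw [hy, norm_smul, norm_inv, Real.norm_eq_abs, abs_of_pos hr0, ← hr, inv_mul_cancel₀ hr0.ne']
    have hxy : x = r • y := by
      rw [hy, smul_smul, mul_inv_cancel₀ hr0.ne', one_smul]
    have hsm : ∀ (s : ℝ) (z : EuclideanSpace ℂ (Fin p)), s • z = (s : ℂ) • z := by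
      intro s z
      rw [← algebraMap_smul ℂ s z, Complex.coe_algebraMap]
    have hgscale : g x = r ^ 2 * g y := by
      rw [hg]
      simp only
      rw [hxy, hsm r y, _root_.map_smul, inner_smul_left, inner_smul_right, Complex.conj_ofReal,
        Complex.re_ofReal_mul, Complex.re_ofReal_mul]
      ring
    have hymem : y ∈ Metric.sphere (0 : EuclideanSpace ℂ (Fin p)) 1 := by
      simpa using hyn
    have := hx₀min hymem
    calc g x₀ * ‖x‖ ^ 2 = ‖x‖ ^ 2 * g x₀ := by ring
      _ ≤ ‖x‖ ^ 2 * g y := by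
          apply mul_le_mul_of_nonneg_left this (by positivity)
      _ = g x := by rw [hgscale, hr]

end Stmt12Aux

set_option maxHeartbeats 2000000 in
set_option synthInstance.maxHeartbeats 200000 in
open Stmt12Aux in
/-- Let `Σ̂_xx` be symmetric positive definite and `Σ^{(m)}`, `m = 1,…,M`, symmetric
positive semidefinite with `M⁻¹ ∑ₘ Σ^{(m)} = Σ̂_xx`.  Then for all sufficiently small
`α > 0`, the spectral radius of `∏_{m=1}^M (I_p − α Σ^{(m)})` is strictly less
than `1`. -/
theorem stmt12 (M p : ℕ) (hM : 1 ≤ M)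
    (Sbar : Matrix (Fin p) (Fin p) ℝ) (hSbar : Sbar.PosDef)
    (S : Fin M → Matrix (Fin p) (Fin p) ℝ)
    (hS : ∀ m, (S m).PosSemidef)
    (havg : (M : ℝ)⁻¹ • ∑ m, S m = Sbar) :
    ∃ α₀ > (0 : ℝ), ∀ α : ℝ, 0 < α → α < α₀ →
      ∀ μ ∈ spectrum ℂ
        (((List.ofFn (fun m : Fin M => (1 : Matrix (Fin p) (Fin p) ℝ) - α • S m)).prod).map
          (Complex.ofReal)),
        ‖μ‖ < 1 := by
  rcases Nat.eq_zero_or_pos p with hp0 | hp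
  · subst hp0
    refine ⟨1, one_pos, fun α _ _ μ hμ => ?_⟩
    exact absurd (isUnit_of_subsingleton _) (spectrum.mem_iff.mp hμ)
  · haveI : Nonempty (Fin p) := ⟨⟨0, hp⟩⟩
    haveI : CompleteSpace (Matrix (Fin p) (Fin p) ℂ) := FiniteDimensional.complete ℂ _
    haveI : NormOneClass (Matrix (Fin p) (Fin p) ℂ) := ⟨by
      rw [Matrix.cstar_norm_def, _root_.map_one]
      exact ContinuousLinearMap.norm_id⟩
    have hMR : (0:ℝ) < M := by exact_mod_cast hM
    set Areal := ∑ m, S m with hAreal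
    have hsum : Areal = (M : ℝ) • Sbar := by
      rw [← havg, smul_smul, mul_inv_cancel₀ hMR.ne', one_smul]
    have hpos : ∀ u : Fin p → ℝ, u ≠ 0 → 0 < u ⬝ᵥ (Areal *ᵥ u) := by
      intro u hu
      rw [hsum, smul_mulVec, dotProduct_smul]
      have h1 := hSbar.dotProduct_mulVec_pos hu
      rw [star_trivial] at h1
      exact smul_pos hMR h1
    have hnn : ∀ u : Fin p → ℝ, 0 ≤ u ⬝ᵥ (Areal *ᵥ u) := by
      intro u
      rw [hsum, smul_mulVec, dotProduct_smul]
      have h1 := hSbar.posSemidef.dotProduct_mulVec_nonneg u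
      rw [star_trivial] at h1
      exact smul_nonneg hMR.le h1
    obtain ⟨c, hc, hcoer⟩ := coercive p hp Areal hpos hnn
    set B : Matrix (Fin p) (Fin p) ℂ := Areal.map Complex.ofReal with hB
    set Tm : Fin M → Matrix (Fin p) (Fin p) ℂ := fun m => (S m).map Complex.ofReal with hTm
    set K : ℝ := 1 + c + ∑ m, ‖Tm m‖ with hKdef
    have hsumnorm : (0:ℝ) ≤ ∑ m, ‖Tm m‖ := Finset.sum_nonneg fun m _ => norm_nonneg _
    have hK1 : 1 ≤ K := by rw [hKdef]; linarith
    have hKc : c ≤ K := by rw [hKdef]; linarith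
    have hK0 : 0 < K := lt_of_lt_of_le one_pos hK1
    have hKm : ∀ m, ‖Tm m‖ ≤ K := by
      intro m
      rw [hKdef]
      have : ‖Tm m‖ ≤ ∑ m', ‖Tm m'‖ :=
        Finset.single_le_sum (fun i _ => norm_nonneg (Tm i)) (Finset.mem_univ m)
      linarith
    have hBsum : B = ∑ m, Tm m := by
      rw [hB, hAreal]
      ext i j
      simp [hTm, Matrix.map_apply, Matrix.sum_apply, Complex.ofReal_sum]
    have hKB : ‖B‖ ≤ K := by
      rw [hBsum, hKdef]
      calc ‖∑ m, Tm m‖ ≤ ∑ m, ‖Tm m‖ := norm_sum_le _ _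
        _ ≤ 1 + c + ∑ m, ‖Tm m‖ := by linarith
    set CC : ℝ := K ^ 2 * M * 3 ^ M with hCC
    have hCC0 : 0 < CC := by rw [hCC]; positivity
    refine ⟨min (1 / K) (min (c / K ^ 2) (c / (4 * CC))), by positivity, fun α hα hαlt μ hμ => ?_⟩
    have hαK : α * K ≤ 1 := by
      have h1 : α < 1 / K := lt_of_lt_of_le hαlt (min_le_left _ _)
      rw [lt_div_iff₀ hK0] at h1
      linarith
    have hαK2 : α * K ^ 2 ≤ c := by
      have h1 : α < c / K ^ 2 := lt_of_lt_of_le hαlt (le_trans (min_le_right _ _) (min_le_left _ _))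
      rw [lt_div_iff₀ (by positivity)] at h1
      linarith
    have hαCC : α * CC ≤ c / 4 := by
      have h1 : α < c / (4 * CC) :=
        lt_of_lt_of_le hαlt (le_trans (min_le_right _ _) (min_le_right _ _))
      rw [lt_div_iff₀ (by positivity)] at h1
      linarith
    have hαc1 : α * c ≤ 1 := by nlinarith
    -- rewrite the matrix
    set φ : Matrix (Fin p) (Fin p) ℝ →+* Matrix (Fin p) (Fin p) ℂ :=
      (Complex.ofRealHom).mapMatrix with hφ
    have hmat : ((List.ofFn (fun m : Fin M => (1 : Matrix (Fin p) (Fin p) ℝ) - α • S m)).prod).map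
          Complex.ofReal
        = (List.ofFn (fun m : Fin M =>
            (1 : Matrix (Fin p) (Fin p) ℂ) - (α : ℂ) • Tm m)).prod := by
      have h1 : ((List.ofFn (fun m : Fin M => (1 : Matrix (Fin p) (Fin p) ℝ) - α • S m)).prod).map
          Complex.ofReal
          = φ (List.ofFn (fun m : Fin M => (1 : Matrix (Fin p) (Fin p) ℝ) - α • S m)).prod := by
        rw [hφ, RingHom.mapMatrix_apply]
        rfl
      rw [h1, map_list_prod, List.map_ofFn]
      refine congrArg List.prod (congrArg List.ofFn (funext fun m => ?_))
      simp only [Function.comp_apply, map_sub, _root_.map_one, hφ, RingHom.mapMatrix_apply]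
      congr 1
      ext i j
      simp [hTm, Matrix.map_apply, Complex.ofReal_mul, Complex.real_smul]
    rw [hmat] at hμ
    -- spectral bound
    have hspec : ‖μ‖ ≤ ‖(List.ofFn (fun m : Fin M =>
        (1 : Matrix (Fin p) (Fin p) ℂ) - (α : ℂ) • Tm m)).prod‖ :=
      spectrum.norm_le_norm_of_mem hμ
    -- expansion bound
    set L : List (Matrix (Fin p) (Fin p) ℂ) := List.ofFn Tm with hL
    have hLmap : List.ofFn (fun m : Fin M => (1 : Matrix (Fin p) (Fin p) ℂ) - (α : ℂ) • Tm m)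
        = L.map (fun T => 1 - (α : ℂ) • T) := by
      rw [hL, List.map_ofFn]
      rfl
    have hLsum : L.sum = B := by
      rw [hL, List.sum_ofFn, hBsum]
    have hLlen : L.length = M := by rw [hL, List.length_ofFn]
    have hLbd : ∀ T ∈ L, ‖T‖ ≤ K := by
      intro T hT
      rw [hL, List.mem_ofFn] at hT
      obtain ⟨m, rfl⟩ := hT
      exact hKm m
    have hexp := expand p K α hK1 hα.le hαK L hLbd
    rw [hLsum, hLlen] at hexp
    -- norm of 1 - α B
    set TB := Matrix.toEuclideanCLM (𝕜 := ℂ) B with hTBdef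
    have hTBnorm : ‖TB‖ = ‖B‖ := (Matrix.cstar_norm_def B).symm
    have hBnorm : ‖(1 : Matrix (Fin p) (Fin p) ℂ) - (α : ℂ) • B‖ ≤ 1 - α * c / 2 := by
      rw [Matrix.cstar_norm_def, map_sub, _root_.map_one, _root_.map_smul, ← hTBdef]
      have hrhs0 : (0:ℝ) ≤ 1 - α * c / 2 := by linarith
      apply ContinuousLinearMap.opNorm_le_bound _ hrhs0
      intro x
      have happ : ((1 : EuclideanSpace ℂ (Fin p) →L[ℂ] EuclideanSpace ℂ (Fin p))
          - (α : ℂ) • TB) x = x - (α : ℂ) • TB x := by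
        simp
      rw [happ]
      have hTBx : ‖TB x‖ ≤ K * ‖x‖ := by
        calc ‖TB x‖ ≤ ‖TB‖ * ‖x‖ := TB.le_opNorm x
          _ ≤ K * ‖x‖ := by
              apply mul_le_mul_of_nonneg_right _ (norm_nonneg x)
              rw [hTBnorm]; exact hKB
      have hcx : c * ‖x‖ ^ 2 ≤ (⟪x, TB x⟫_ℂ).re := hcoer x
      have hsq : ‖x - (α : ℂ) • TB x‖ ^ 2
          = ‖x‖ ^ 2 - 2 * (α * (⟪x, TB x⟫_ℂ).re) + α ^ 2 * ‖TB x‖ ^ 2 := by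
        rw [@norm_sub_sq ℂ, inner_smul_right]
        rw [norm_smul, Complex.norm_real, Real.norm_eq_abs, abs_of_nonneg hα.le]
        simp only [RCLike.re_to_complex, Complex.re_ofReal_mul]
        ring
      have hTBx2 : ‖TB x‖ ^ 2 ≤ (K * ‖x‖) ^ 2 := pow_le_pow_left₀ (norm_nonneg _) hTBx 2
      have hsqle : ‖x - (α : ℂ) • TB x‖ ^ 2 ≤ ((1 - α * c / 2) * ‖x‖) ^ 2 := by
        rw [hsq]
        nlinarith [sq_nonneg ‖x‖, mul_nonneg hα.le hc.le,
          mul_nonneg (mul_nonneg hα.le hα.le) (sq_nonneg (c * ‖x‖)),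
          mul_nonneg (mul_nonneg hα.le (sub_nonneg.mpr hαK2)) (sq_nonneg ‖x‖)]
      have h1 := Real.sqrt_le_sqrt hsqle
      rwa [Real.sqrt_sq (norm_nonneg _),
        Real.sqrt_sq (by positivity : (0:ℝ) ≤ (1 - α * c / 2) * ‖x‖)] at h1
    -- assemble
    have hfinal : ‖(List.ofFn (fun m : Fin M =>
        (1 : Matrix (Fin p) (Fin p) ℂ) - (α : ℂ) • Tm m)).prod‖ < 1 := by
      rw [hLmap]
      set P := (L.map (fun T => 1 - (α : ℂ) • T)).prod with hP
      calc ‖P‖ ≤ ‖P - (1 - (α : ℂ) • B)‖ + ‖1 - (α : ℂ) • B‖ := by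
            simpa using norm_add_le (P - (1 - (α : ℂ) • B)) (1 - (α : ℂ) • B)
        _ ≤ α ^ 2 * K ^ 2 * M * 3 ^ M + (1 - α * c / 2) := add_le_add hexp hBnorm
        _ < 1 := by
            have he : α ^ 2 * K ^ 2 * M * 3 ^ M = α * (α * CC) := by rw [hCC]; ring
            rw [he]
            nlinarith [mul_le_mul_of_nonneg_left hαCC hα.le]
    calc ‖μ‖ ≤ _ := hspec
      _ < 1 := hfinal
end

section
/- Let X₁,...,X_N be i.i.d. random vectors in R^p with E‖X_i‖⁴ < ∞, partitioned into M disjoint groups S_{(1)},...,S_{(M)} of equal size n = N/M by simple random assignment. Let Σ̂^{(m)} = n^{-1}Σ_{i∈S_{(m)}} X_iX_iᵀ and Σ̂ = N^{-1}Σ_{i=1}^N X_iX_iᵀ. Then the average squared deviation tr[M^{-1}Σ_{m=1}^M (Σ̂^{(m)} − Σ̂)²] = O_p(1/n). -/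
open MeasureTheory ProbabilityTheory Filter

lemma aux_sum_range_mul {β : Type*} [AddCommMonoid β] (g : ℕ → β) (M n : ℕ) :
    ∑ j ∈ Finset.range (M * n), g j
      = ∑ m ∈ Finset.range M, ∑ i ∈ Finset.range n, g (m * n + i) := by
  induction M with
  | zero => simp
  | succ M ih =>
      rw [Nat.succ_mul, Finset.sum_range_add, ih, Finset.sum_range_succ]

lemma aux_second_moment {Ω : Type*} [MeasurableSpace Ω] (μ : Measure Ω) [IsProbabilityMeasure μ]
    (N : ℕ) (Y : ℕ → Ω → ℝ) (w : ℕ → ℝ)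
    (hindep : ∀ i j, i ≠ j → IndepFun (Y i) (Y j) μ)
    (hint : ∀ i, Integrable (Y i) μ)
    (hsq : ∀ i, Integrable (fun ω => Y i ω ^ 2) μ)
    (K : ℝ) (hK : ∀ i, ∫ ω, Y i ω ^ 2 ∂μ ≤ K)
    (hmean : ∀ i, ∫ ω, Y i ω ∂μ = ∫ ω, Y 0 ω ∂μ)
    (hw : ∑ j ∈ Finset.range N, w j = 0) :
    Integrable (fun ω => (∑ j ∈ Finset.range N, w j * Y j ω) ^ 2) μ ∧
      ∫ ω, (∑ j ∈ Finset.range N, w j * Y j ω) ^ 2 ∂μ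
        ≤ (∑ j ∈ Finset.range N, (w j) ^ 2) * K := by
  classical
  set s := Finset.range N with hs
  have hexp : (fun ω => (∑ j ∈ s, w j * Y j ω) ^ 2)
      = fun ω => ∑ i ∈ s, ∑ j ∈ s, (w i * Y i ω) * (w j * Y j ω) := by
    funext ω
    rw [sq, Finset.sum_mul_sum]
  have hgint : ∀ i ∈ s, ∀ j ∈ s,
      Integrable (fun ω => (w i * Y i ω) * (w j * Y j ω)) μ := by
    intro i _ j _
    by_cases hij : i = j
    · subst hij
      have := (hsq i).const_mul (w i * w i)
      exact this.congr (by filter_upwards with ω; ring)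
    · have hI : IndepFun (fun ω => w i * Y i ω) (fun ω => w j * Y j ω) μ :=
        (hindep i j hij).comp (measurable_const_mul (w i)) (measurable_const_mul (w j))
      exact hI.integrable_mul ((hint i).const_mul _) ((hint j).const_mul _)
  have hIntSq : Integrable (fun ω => (∑ j ∈ s, w j * Y j ω) ^ 2) μ := by
    rw [hexp]
    exact integrable_finset_sum _ fun i hi => integrable_finset_sum _ fun j hj => hgint i hi j hj
  refine ⟨hIntSq, ?_⟩
  have hval : ∫ ω, (∑ j ∈ s, w j * Y j ω) ^ 2 ∂μ
      = ∑ i ∈ s, ∑ j ∈ s, ∫ ω, (w i * Y i ω) * (w j * Y j ω) ∂μ := by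
    rw [hexp, integral_finset_sum _ fun i hi =>
      integrable_finset_sum _ fun j hj => hgint i hi j hj]
    exact Finset.sum_congr rfl fun i hi => integral_finset_sum _ fun j hj => hgint i hi j hj
  set m1 : ℝ := ∫ ω, Y 0 ω ∂μ with hm1
  have hterm : ∀ i ∈ s, ∀ j ∈ s,
      ∫ ω, (w i * Y i ω) * (w j * Y j ω) ∂μ
        = (w i * m1) * (w j * m1)
          + (if i = j then w i ^ 2 * ((∫ ω, Y i ω ^ 2 ∂μ) - m1 ^ 2) else 0) := by
    intro i _ j _
    by_cases hij : i = j
    · subst hij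
      rw [if_pos rfl]
      have : ∫ ω, (w i * Y i ω) * (w i * Y i ω) ∂μ
          = (w i * w i) * ∫ ω, Y i ω ^ 2 ∂μ := by
        rw [← integral_const_mul _ _]
        congr 1; funext ω; ring
      rw [this]; ring
    · simp only [if_neg hij, add_zero]
      have hI : IndepFun (fun ω => w i * Y i ω) (fun ω => w j * Y j ω) μ :=
        (hindep i j hij).comp (measurable_const_mul (w i)) (measurable_const_mul (w j))
      have := hI.integral_mul_eq_mul_integral ((hint i).const_mul (w i)).aestronglyMeasurable
        ((hint j).const_mul (w j)).aestronglyMeasurable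
      have h2 : ∫ ω, (w i * Y i ω) * (w j * Y j ω) ∂μ
          = (∫ ω, w i * Y i ω ∂μ) * ∫ ω, w j * Y j ω ∂μ := this
      rw [h2, integral_const_mul _ _, integral_const_mul _ _, hmean i, hmean j]
  rw [hval]
  have hsum : ∑ i ∈ s, ∑ j ∈ s, ∫ ω, (w i * Y i ω) * (w j * Y j ω) ∂μ
      = ∑ i ∈ s, w i ^ 2 * ((∫ ω, Y i ω ^ 2 ∂μ) - m1 ^ 2) := by
    rw [Finset.sum_congr rfl fun i hi => Finset.sum_congr rfl fun j hj => hterm i hi j hj]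
    have : ∑ i ∈ s, ∑ j ∈ s, ((w i * m1) * (w j * m1)
        + (if i = j then w i ^ 2 * ((∫ ω, Y i ω ^ 2 ∂μ) - m1 ^ 2) else 0))
        = (∑ i ∈ s, w i * m1) * (∑ j ∈ s, w j * m1)
          + ∑ i ∈ s, ∑ j ∈ s, (if i = j then w i ^ 2 * ((∫ ω, Y i ω ^ 2 ∂μ) - m1 ^ 2) else 0) := by
      rw [Finset.sum_mul_sum, ← Finset.sum_add_distrib]
      exact Finset.sum_congr rfl fun i _ => by rw [← Finset.sum_add_distrib]
    rw [this, ← Finset.sum_mul, hw, zero_mul, zero_mul, zero_add]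
    exact Finset.sum_congr rfl fun i hi => by rw [Finset.sum_ite_eq s i _, if_pos hi]
  rw [hsum, Finset.sum_mul]
  refine Finset.sum_le_sum fun i _ => ?_
  have h1 : (∫ ω, Y i ω ^ 2 ∂μ) - m1 ^ 2 ≤ K := by
    have := hK i
    nlinarith [sq_nonneg m1]
  exact mul_le_mul_of_nonneg_left h1 (sq_nonneg _)

/-- Let `X₁, X₂, …` be i.i.d. random vectors in `ℝ^p` with `E‖X‖⁴ < ∞`.  For each
local sample size `n`, the first `N = Mn` observations are partitioned into `M`
groups of size `n` (group `m` getting observations `mn, …, mn + n − 1`; by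
exchangeability of an i.i.d. sample this is equivalent to simple random assignment).
With `Σ̂^{(m)} = n⁻¹ ∑_{i ∈ S_m} XᵢXᵢᵀ` and `Σ̂ = N⁻¹ ∑ᵢ XᵢXᵢᵀ = M⁻¹ ∑ₘ Σ̂^{(m)}`,
the quantity `T_n = tr[M⁻¹ ∑ₘ (Σ̂^{(m)} − Σ̂)²]` satisfies `T_n = O_p(1/n)`:
`n·T_n` is bounded in probability as `n → ∞`. -/
theorem stmt14 (p M : ℕ) (hp : 0 < p) (hM : 0 < M)
    {Ω : Type*} [MeasurableSpace Ω] (μ : Measure Ω) [IsProbabilityMeasure μ]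
    (X : ℕ → Ω → (Fin p → ℝ))
    (hmeas : ∀ i, Measurable (X i))
    (hindep : iIndepFun X μ)
    (hident : ∀ i, IdentDistrib (X i) (X 0) μ μ)
    (hmom4 : Integrable (fun ω => ‖X 0 ω‖ ^ 4) μ)
    (T : ℕ → Ω → ℝ)
    (hT : ∀ (n : ℕ) (ω : Ω),
      T n ω =
        (let Sig : Fin M → Matrix (Fin p) (Fin p) ℝ := fun m =>
          Matrix.of fun a b =>
            (n : ℝ)⁻¹ * ∑ i ∈ Finset.range n, X (m.val * n + i) ω a * X (m.val * n + i) ω b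
         let Sbar : Matrix (Fin p) (Fin p) ℝ := (M : ℝ)⁻¹ • ∑ m, Sig m
         (M : ℝ)⁻¹ * ∑ m, Matrix.trace ((Sig m - Sbar) * (Sig m - Sbar)))) :
    ∀ ε : ℝ, 0 < ε → ∃ C > (0 : ℝ),
      ∀ᶠ n : ℕ in atTop, μ {ω | C ≤ (n : ℝ) * T n ω} ≤ ENNReal.ofReal ε := by
  classical
  intro ε hε
  set K : ℝ := ∫ ω, ‖X 0 ω‖ ^ 4 ∂μ with hKdef
  have hK0 : 0 ≤ K := integral_nonneg fun ω => by positivity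
  -- fourth moments of each X i
  have hmom4' : ∀ i, Integrable (fun ω => ‖X i ω‖ ^ 4) μ := by
    intro i
    have hid : IdentDistrib (fun ω => ‖X i ω‖ ^ 4) (fun ω => ‖X 0 ω‖ ^ 4) μ μ :=
      (hident i).comp (measurable_norm.pow_const 4)
    exact hid.integrable_iff.mpr hmom4
  -- pointwise products
  have hYmeas : ∀ (a b : Fin p) (i : ℕ), Measurable (fun ω => X i ω a * X i ω b) :=
    fun a b i => ((measurable_pi_apply a).comp (hmeas i)).mul
      ((measurable_pi_apply b).comp (hmeas i))
  have habs : ∀ (a b : Fin p) (x : Fin p → ℝ), (x a * x b) ^ 2 ≤ ‖x‖ ^ 4 := by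
    intro a b x
    have h1 : |x a| ≤ ‖x‖ := by
      simpa [Real.norm_eq_abs] using norm_le_pi_norm x a
    have h2 : |x b| ≤ ‖x‖ := by
      simpa [Real.norm_eq_abs] using norm_le_pi_norm x b
    have h0 : (0:ℝ) ≤ ‖x‖ := norm_nonneg x
    have h3 : |x a * x b| ≤ ‖x‖ ^ 2 := by
      rw [abs_mul]
      nlinarith [abs_nonneg (x a), abs_nonneg (x b)]
    calc (x a * x b) ^ 2 = |x a * x b| ^ 2 := (sq_abs _).symm
      _ ≤ (‖x‖ ^ 2) ^ 2 := by nlinarith [abs_nonneg (x a * x b)]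
      _ = ‖x‖ ^ 4 := by ring
  have hYsq : ∀ (a b : Fin p) (i : ℕ),
      Integrable (fun ω => (X i ω a * X i ω b) ^ 2) μ := by
    intro a b i
    refine (hmom4' i).mono' ((hYmeas a b i).pow_const 2).aestronglyMeasurable ?_
    filter_upwards with ω
    have := habs a b (X i ω)
    have h0 : (0:ℝ) ≤ (X i ω a * X i ω b) ^ 2 := sq_nonneg _
    rw [Real.norm_eq_abs, abs_of_nonneg h0]
    exact this
  have hYint : ∀ (a b : Fin p) (i : ℕ),
      Integrable (fun ω => X i ω a * X i ω b) μ := by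
    intro a b i
    have := (memLp_two_iff_integrable_sq
      (hYmeas a b i).aestronglyMeasurable).mpr (hYsq a b i)
    exact this.integrable (by norm_num)
  have hYident : ∀ (a b : Fin p) (i : ℕ),
      IdentDistrib (fun ω => X i ω a * X i ω b) (fun ω => X 0 ω a * X 0 ω b) μ μ :=
    fun a b i => (hident i).comp ((measurable_pi_apply a).mul (measurable_pi_apply b))
  have hYmean : ∀ (a b : Fin p) (i : ℕ),
      ∫ ω, X i ω a * X i ω b ∂μ = ∫ ω, X 0 ω a * X 0 ω b ∂μ :=
    fun a b i => (hYident a b i).integral_eq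
  have hYK : ∀ (a b : Fin p) (i : ℕ), ∫ ω, (X i ω a * X i ω b) ^ 2 ∂μ ≤ K := by
    intro a b i
    have hid : IdentDistrib (fun ω => (X i ω a * X i ω b) ^ 2)
        (fun ω => (X 0 ω a * X 0 ω b) ^ 2) μ μ :=
      (hYident a b i).comp (measurable_id.pow_const 2)
    rw [hid.integral_eq]
    exact integral_mono (hYsq a b 0) hmom4 fun ω => habs a b (X 0 ω)
  have hYindep : ∀ (a b : Fin p) (i j : ℕ), i ≠ j →
      IndepFun (fun ω => X i ω a * X i ω b) (fun ω => X j ω a * X j ω b) μ := by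
    intro a b i j hij
    exact (hindep.indepFun hij).comp
      ((measurable_pi_apply a).mul (measurable_pi_apply b))
      ((measurable_pi_apply a).mul (measurable_pi_apply b))
  -- the constant
  refine ⟨(p:ℝ)^2 * M * K / ε + 1, by positivity, ?_⟩
  set C : ℝ := (p:ℝ)^2 * M * K / ε + 1 with hCdef
  have hCpos : 0 < C := by positivity
  rw [eventually_atTop]
  refine ⟨1, fun n hn => ?_⟩
  have hn0 : (0:ℝ) < (n:ℝ) := by exact_mod_cast hn
  have hMn0 : (0:ℝ) < ((M*n : ℕ):ℝ) := by
    have : 0 < M * n := Nat.mul_pos hM hn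
    exact_mod_cast this
  -- weights
  set w : Fin M → ℕ → ℝ := fun m j =>
    (if j ∈ Finset.Ico (m.1 * n) (m.1 * n + n) then (n:ℝ)⁻¹ else 0) - ((M*n : ℕ):ℝ)⁻¹
    with hwdef
  have hsub : ∀ m : Fin M,
      Finset.Ico (m.1 * n) (m.1 * n + n) ⊆ Finset.range (M*n) := by
    intro m j hj
    rw [Finset.mem_Ico] at hj
    rw [Finset.mem_range]
    calc j < m.1 * n + n := hj.2
      _ = (m.1 + 1) * n := by ring
      _ ≤ M * n := Nat.mul_le_mul_right n m.2
  have hIcoSum : ∀ (m : Fin M) (f : ℕ → ℝ),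
      ∑ j ∈ Finset.range (M*n), (if j ∈ Finset.Ico (m.1 * n) (m.1 * n + n) then f j else 0)
        = ∑ i ∈ Finset.range n, f (m.1 * n + i) := by
    intro m f
    rw [Finset.sum_ite_mem, Finset.inter_eq_right.mpr (hsub m),
      Finset.sum_Ico_eq_sum_range]
    simp
  have hwsum : ∀ m : Fin M, ∑ j ∈ Finset.range (M*n), w m j = 0 := by
    intro m
    rw [hwdef]
    rw [Finset.sum_sub_distrib, Finset.sum_const, Finset.card_range]
    rw [hIcoSum m (fun _ => (n:ℝ)⁻¹), Finset.sum_const, Finset.card_range]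
    rw [nsmul_eq_mul, nsmul_eq_mul, mul_inv_cancel₀ hn0.ne', mul_inv_cancel₀ hMn0.ne', sub_self]
  have hwsq : ∀ m : Fin M,
      ∑ j ∈ Finset.range (M*n), (w m j)^2 ≤ (M:ℝ) * (n:ℝ)⁻¹ := by
    intro m
    have hbound : ∀ j, (w m j)^2 ≤ ((n:ℝ)⁻¹)^2 := by
      intro j
      have hMn_inv : (0:ℝ) ≤ ((M*n : ℕ):ℝ)⁻¹ := by positivity
      have hle : ((M*n : ℕ):ℝ)⁻¹ ≤ (n:ℝ)⁻¹ := by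
        apply inv_anti₀ hn0
        have : n ≤ M * n := Nat.le_mul_of_pos_left n hM
        exact_mod_cast this
      have hninv : (0:ℝ) ≤ (n:ℝ)⁻¹ := by positivity
      rw [hwdef]
      simp only
      apply sq_le_sq'
      · split <;> nlinarith
      · split <;> nlinarith
    calc ∑ j ∈ Finset.range (M*n), (w m j)^2
        ≤ ∑ j ∈ Finset.range (M*n), ((n:ℝ)⁻¹)^2 :=
          Finset.sum_le_sum fun j _ => hbound j
      _ = (M*n : ℕ) * ((n:ℝ)⁻¹)^2 := by rw [Finset.sum_const, Finset.card_range, nsmul_eq_mul]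
      _ = (M:ℝ) * (n:ℝ)⁻¹ := by
          have hc : ((M*n:ℕ):ℝ) = (M:ℝ) * (n:ℝ) := by push_cast; ring
          rw [hc, sq]
          field_simp
  -- rewrite T n as sum of squares of weighted sums
  have tracemul : ∀ A : Matrix (Fin p) (Fin p) ℝ,
      Matrix.trace (A * A) = ∑ a : Fin p, ∑ b : Fin p, A a b * A b a := by
    intro A
    rw [Matrix.trace]
    simp [Matrix.mul_apply, Matrix.diag]
  have hTrw : ∀ ω : Ω, T n ω = (M:ℝ)⁻¹ * ∑ m : Fin M, ∑ a : Fin p, ∑ b : Fin p,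
      (∑ j ∈ Finset.range (M*n), w m j * (X j ω a * X j ω b)) ^ 2 := by
    intro ω
    have h1 : ∀ a b : Fin p,
        (M:ℝ)⁻¹ * ∑ m' : Fin M,
            ((n:ℝ)⁻¹ * ∑ i ∈ Finset.range n, X (m'.1*n+i) ω a * X (m'.1*n+i) ω b)
          = ((M*n:ℕ):ℝ)⁻¹ * ∑ j ∈ Finset.range (M*n), X j ω a * X j ω b := by
      intro a b
      have hc : ((M*n:ℕ):ℝ)⁻¹ = (M:ℝ)⁻¹ * (n:ℝ)⁻¹ := by push_cast; rw [mul_inv]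
      rw [hc, aux_sum_range_mul (fun j => X j ω a * X j ω b) M n,
        ← Fin.sum_univ_eq_sum_range
          (fun m' => ∑ i ∈ Finset.range n, X (m' * n + i) ω a * X (m' * n + i) ω b) M,
        mul_assoc, Finset.mul_sum]
      simp [Finset.mul_sum]
    have h2 : ∀ (m : Fin M) (a b : Fin p),
        ∑ j ∈ Finset.range (M*n),
            (if j ∈ Finset.Ico (m.1*n) (m.1*n+n) then (n:ℝ)⁻¹ else 0) * (X j ω a * X j ω b)
          = (n:ℝ)⁻¹ * ∑ i ∈ Finset.range n, X (m.1*n+i) ω a * X (m.1*n+i) ω b := by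
      intro m a b
      calc ∑ j ∈ Finset.range (M*n),
            (if j ∈ Finset.Ico (m.1*n) (m.1*n+n) then (n:ℝ)⁻¹ else 0) * (X j ω a * X j ω b)
          = ∑ j ∈ Finset.range (M*n),
            (if j ∈ Finset.Ico (m.1*n) (m.1*n+n) then (n:ℝ)⁻¹ * (X j ω a * X j ω b) else 0) := by
            refine Finset.sum_congr rfl fun j _ => ?_
            split <;> simp
        _ = ∑ i ∈ Finset.range n, (n:ℝ)⁻¹ * (X (m.1*n+i) ω a * X (m.1*n+i) ω b) :=
            hIcoSum m _
        _ = (n:ℝ)⁻¹ * ∑ i ∈ Finset.range n, X (m.1*n+i) ω a * X (m.1*n+i) ω b := by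
            rw [Finset.mul_sum]
    have hkey : ∀ (m : Fin M) (a b : Fin p),
        (n:ℝ)⁻¹ * (∑ i ∈ Finset.range n, X (m.1*n+i) ω a * X (m.1*n+i) ω b)
          - (M:ℝ)⁻¹ * ∑ m' : Fin M,
              ((n:ℝ)⁻¹ * ∑ i ∈ Finset.range n, X (m'.1*n+i) ω a * X (m'.1*n+i) ω b)
        = ∑ j ∈ Finset.range (M*n), w m j * (X j ω a * X j ω b) := by
      intro m a b
      rw [h1 a b, hwdef]
      simp only [sub_mul, Finset.sum_sub_distrib]
      rw [h2 m a b, ← Finset.mul_sum]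
    rw [hT n ω]
    simp only [tracemul, Matrix.sub_apply, Matrix.smul_apply, Matrix.sum_apply,
      Matrix.of_apply, smul_eq_mul]
    congr 1
    refine Finset.sum_congr rfl fun m _ => Finset.sum_congr rfl fun a _ =>
      Finset.sum_congr rfl fun b _ => ?_
    rw [hkey m a b, hkey m b a, sq]
    congr 1
    exact Finset.sum_congr rfl fun j _ => by ring
  -- integrability and expectation bound
  have hsm := fun (m : Fin M) (a b : Fin p) =>
    aux_second_moment μ (M*n) (fun j ω => X j ω a * X j ω b) (w m)
      (fun i j hij => hYindep a b i j hij) (fun i => hYint a b i) (fun i => hYsq a b i)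
      K (fun i => hYK a b i) (fun i => hYmean a b i) (hwsum m)
  have hTfun : T n = fun ω => (M:ℝ)⁻¹ * ∑ m : Fin M, ∑ a : Fin p, ∑ b : Fin p,
      (∑ j ∈ Finset.range (M*n), w m j * (X j ω a * X j ω b)) ^ 2 := funext hTrw
  have hIntInner : ∀ m : Fin M, Integrable (fun ω => ∑ a : Fin p, ∑ b : Fin p,
      (∑ j ∈ Finset.range (M*n), w m j * (X j ω a * X j ω b)) ^ 2) μ :=
    fun m => integrable_finset_sum _ fun a _ =>
      integrable_finset_sum _ fun b _ => (hsm m a b).1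
  have hTint : Integrable (T n) μ := by
    rw [hTfun]
    exact (integrable_finset_sum _ fun m _ => hIntInner m).const_mul _
  have hDbound : ∀ (m : Fin M) (a b : Fin p),
      ∫ ω, (∑ j ∈ Finset.range (M*n), w m j * (X j ω a * X j ω b)) ^ 2 ∂μ
        ≤ (M:ℝ) * (n:ℝ)⁻¹ * K :=
    fun m a b => le_trans (hsm m a b).2 (mul_le_mul_of_nonneg_right (hwsq m) hK0)
  have hTmean : ∫ ω, T n ω ∂μ ≤ (p:ℝ)^2 * (M:ℝ) * K * (n:ℝ)⁻¹ := by
    rw [hTfun, integral_const_mul _ _, integral_finset_sum _ fun m _ => hIntInner m]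
    have step : ∀ m : Fin M, ∫ ω, (∑ a : Fin p, ∑ b : Fin p,
        (∑ j ∈ Finset.range (M*n), w m j * (X j ω a * X j ω b)) ^ 2) ∂μ
        = ∑ a : Fin p, ∑ b : Fin p,
          ∫ ω, (∑ j ∈ Finset.range (M*n), w m j * (X j ω a * X j ω b)) ^ 2 ∂μ := by
      intro m
      rw [integral_finset_sum _ fun a _ => integrable_finset_sum _ fun b _ => (hsm m a b).1]
      exact Finset.sum_congr rfl fun a _ => integral_finset_sum _ fun b _ => (hsm m a b).1
    calc (M:ℝ)⁻¹ * ∑ m : Fin M, ∫ ω, (∑ a : Fin p, ∑ b : Fin p,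
          (∑ j ∈ Finset.range (M*n), w m j * (X j ω a * X j ω b)) ^ 2) ∂μ
        ≤ (M:ℝ)⁻¹ * ∑ _m : Fin M, ((p:ℝ)^2 * ((M:ℝ) * (n:ℝ)⁻¹ * K)) := by
          refine mul_le_mul_of_nonneg_left ?_ (by positivity)
          refine Finset.sum_le_sum fun m _ => ?_
          rw [step m]
          calc ∑ a : Fin p, ∑ b : Fin p,
                ∫ ω, (∑ j ∈ Finset.range (M*n), w m j * (X j ω a * X j ω b)) ^ 2 ∂μ
              ≤ ∑ _a : Fin p, ∑ _b : Fin p, ((M:ℝ) * (n:ℝ)⁻¹ * K) :=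
                Finset.sum_le_sum fun a _ => Finset.sum_le_sum fun b _ => hDbound m a b
            _ = (p:ℝ)^2 * ((M:ℝ) * (n:ℝ)⁻¹ * K) := by
                simp [Finset.sum_const, Finset.card_univ]
                ring
      _ = (p:ℝ)^2 * (M:ℝ) * K * (n:ℝ)⁻¹ := by
          rw [Finset.sum_const, Finset.card_univ, Fintype.card_fin, nsmul_eq_mul]
          have hM0 : (M:ℝ) ≠ 0 := by positivity
          field_simp
  -- Markov's inequality
  have hTnonneg : ∀ ω, 0 ≤ T n ω := fun ω => by
    rw [hTrw ω]; positivity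
  have hfint : Integrable (fun ω => (n:ℝ) * T n ω) μ := hTint.const_mul _
  have hmark := mul_meas_ge_le_integral_of_nonneg
    (ae_of_all μ fun ω => mul_nonneg hn0.le (hTnonneg ω)) hfint C
  have hEq : ∫ ω, (n:ℝ) * T n ω ∂μ = (n:ℝ) * ∫ ω, T n ω ∂μ := integral_const_mul _ _
  have hB : (n:ℝ) * ∫ ω, T n ω ∂μ ≤ (p:ℝ)^2 * M * K := by
    calc (n:ℝ) * ∫ ω, T n ω ∂μ ≤ (n:ℝ) * ((p:ℝ)^2 * (M:ℝ) * K * (n:ℝ)⁻¹) :=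
          mul_le_mul_of_nonneg_left hTmean hn0.le
      _ = (p:ℝ)^2 * M * K := by
          have hn0' : (n:ℝ) ≠ 0 := ne_of_gt hn0
          field_simp
  have htoReal : (μ {ω | C ≤ (n:ℝ) * T n ω}).toReal ≤ ε := by
    have hle : C * (μ {ω | C ≤ (n:ℝ) * T n ω}).toReal ≤ (p:ℝ)^2 * M * K :=
      le_trans hmark (by rw [hEq]; exact hB)
    have h2 : (p:ℝ)^2 * M * K ≤ C * ε := by
      rw [hCdef]
      have hd := div_mul_cancel₀ ((p:ℝ)^2 * M * K) (ne_of_gt hε)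
      nlinarith
    have := le_trans hle h2
    exact le_of_mul_le_mul_left this hCpos
  exact (ENNReal.le_ofReal_iff_toReal_le (measure_ne_top μ _) hε.le).mpr htoReal
end

section
/- Suppose Σ̂_{xx}^{(m)} are symmetric with κ₁I_p ⪯ Σ̂_{xx}^{(m)} ⪯ κ₂I_p for all m, W is doubly stochastic, and 0 < α < 2/κ₂. Let θ* be the unique fixed point of θ = Δ*(W⊗I_p)θ + αΣ̂*_{xy} and θ̂*_{ols} = 𝟏_M ⊗ θ̂_{ols} with θ̂_{ols} = Σ̂_{xx}^{-1}Σ̂_{xy}, where Σ̂_{xx} = M^{-1}Σ_m Σ̂_{xx}^{(m)} and Σ̂_{xy} = M^{-1}Σ_m Σ̂_{xy}^{(m)}. Then the residual r = (I − Δ*(W⊗I_p))θ̂*_{ols} − αΣ̂*_{xy} satisfies M^{-1/2}‖r‖ ≤ α · {SE(Σ̂_{xx})‖θ̂_{ols}‖ + SE(Σ̂_{xy})}, where SE²(Σ̂_{xx}) = tr[M^{-1}Σ_m(Σ̂^{(m)}_{xx} − Σ̂_{xx})²] and SE²(Σ̂_{xy}) = M^{-1}Σ_m‖Σ̂^{(m)}_{xy}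 − Σ̂_{xy}‖². -/
/-!
Row-stochasticity of `W` makes `W ⊗ I_p` fix the block-constant vector `θ̂*_ols`, so the `m`-th
block of `r` is `α (Σ̂^{(m)}_xx θ̂_ols − Σ̂^{(m)}_xy)`. Since `Σ̂_xx` is positive definite,
`θ̂_ols` solves the normal equations `Σ̂_xx θ̂_ols = Σ̂_xy`, and subtracting them turns the
block into `α ((Σ̂^{(m)}_xx − Σ̂_xx) θ̂_ols − (Σ̂^{(m)}_xy − Σ̂_xy))`. Minkowski's inequality
separates the two terms; Cauchy–Schwarz row by row bounds `‖(Σ̂^{(m)}_xx − Σ̂_xx) θ̂_ols‖²` by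
the squared Frobenius norm, which for a symmetric matrix is `tr ((Σ̂^{(m)}_xx − Σ̂_xx)²)`.
-/

open Matrix

lemma Real.sqrt_mul_sum_sq_sub_le {ι : Type*} [Fintype ι] (c : ℝ) (u v : ι → ℝ) :
    √(c * ∑ i, (u i - v i) ^ 2) ≤ √(c * ∑ i, u i ^ 2) + √(c * ∑ i, v i ^ 2) := by
  have h := norm_sub_le (WithLp.toLp 2 u : EuclideanSpace ℝ ι) (WithLp.toLp 2 v)
  simp only [EuclideanSpace.norm_eq, Real.norm_eq_abs, sq_abs, WithLp.ofLp_sub,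
    Pi.sub_apply] at h
  rw [Real.sqrt_mul' _ (by positivity), Real.sqrt_mul' _ (by positivity),
    Real.sqrt_mul' _ (by positivity), ← mul_add]
  exact mul_le_mul_of_nonneg_left h (Real.sqrt_nonneg c)

namespace Matrix

variable {m n ι κ R : Type*}

lemma sum_sq_mulVec_le [Fintype m] [Fintype n] [CommRing R] [LinearOrder R]
    [IsStrictOrderedRing R] (A : Matrix m n R) (v : n → R) :
    ∑ i, (A *ᵥ v) i ^ 2 ≤ (∑ i, ∑ j, A i j ^ 2) * ∑ j, v j ^ 2 := by
  rw [Finset.sum_mul]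
  exact Finset.sum_le_sum fun i _ => Finset.sum_mul_sq_le_sq_mul_sq _ (A i) v

lemma IsHermitian.trace_mul_self [Fintype n] [CommSemiring R] [StarRing R] [TrivialStar R]
    {A : Matrix n n R} (hA : A.IsHermitian) : trace (A * A) = ∑ i, ∑ j, A i j ^ 2 := by
  simp only [trace, diag_apply, mul_apply, sq]
  refine Finset.sum_congr rfl fun i _ => Finset.sum_congr rfl fun j _ => ?_
  rw [← hA.apply i j, star_trivial]

lemma PosDef.smul_sum_of_posSemidef_sub_smul_one [Fintype ι] [Nonempty ι] [DecidableEq n]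
    {S : ι → Matrix n n ℝ} {κ c : ℝ} (hκ : 0 < κ) (hc : 0 < c)
    (hS : ∀ k, (S k - κ • 1).PosSemidef) : (c • ∑ k, S k).PosDef := by
  refine (posDef_sum Finset.univ_nonempty fun k _ => ?_).smul hc
  simpa using PosDef.posSemidef_add (hS k) (PosDef.one.smul hκ)

section Blocks

variable [Fintype ι] [Fintype κ] [CommRing R]

lemma mulVec_eq_self_of_sum_row_eq_one [DecidableEq κ] {W : Matrix ι ι R}
    (hW : ∀ k, ∑ l, W k l = 1) {Wk : Matrix (ι × κ) (ι × κ) R}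
    (hWk : ∀ k i l j, Wk (k, i) (l, j) = if i = j then W k l else 0)
    {θ : κ → R} {θs : ι × κ → R} (hθs : ∀ k i, θs (k, i) = θ i) : Wk *ᵥ θs = θs := by
  ext ⟨k, i⟩
  simp only [mulVec, dotProduct, Fintype.sum_prod_type, hWk, hθs, ite_mul, zero_mul,
    Finset.sum_ite_eq, Finset.mem_univ, if_true, ← Finset.sum_mul, hW, one_mul]

lemma mulVec_apply_of_blockDiagonal [DecidableEq ι] {D : ι → Matrix κ κ R}
    {Δ : Matrix (ι × κ) (ι × κ) R}
    (hΔ : ∀ k i l j, Δ (k, i) (l, j) = if k = l then D k i j else 0)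
    {θ : κ → R} {θs : ι × κ → R} (hθs : ∀ k i, θs (k, i) = θ i) (k : ι) (i : κ) :
    (Δ *ᵥ θs) (k, i) = (D k *ᵥ θ) i := by
  simp only [mulVec, dotProduct, Fintype.sum_prod_type, hΔ, hθs, ite_mul, zero_mul,
    Finset.sum_ite_irrel, Finset.sum_const_zero, Finset.sum_ite_eq, Finset.mem_univ, if_true]

lemma residual_block_apply [DecidableEq ι] [DecidableEq κ] {S : ι → Matrix κ κ R} {α : R}
    {Δ : Matrix (ι × κ) (ι × κ) R}
    (hΔ : ∀ k i l j, Δ (k, i) (l, j) = if k = l then (1 - α • S k) i j else 0)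
    {W : Matrix ι ι R} (hW : ∀ k, ∑ l, W k l = 1) {Wk : Matrix (ι × κ) (ι × κ) R}
    (hWk : ∀ k i l j, Wk (k, i) (l, j) = if i = j then W k l else 0)
    {θ : κ → R} {θs : ι × κ → R} (hθs : ∀ k i, θs (k, i) = θ i)
    {y : ι → κ → R} {ys : ι × κ → R} (hys : ∀ k i, ys (k, i) = y k i) (k : ι) (i : κ) :
    ((1 - Δ * Wk) *ᵥ θs - α • ys : ι × κ → R) (k, i) = α * ((S k *ᵥ θ) i - y k i) := by
  rw [sub_mulVec, one_mulVec, ← mulVec_mulVec, mulVec_eq_self_of_sum_row_eq_one hW hWk hθs]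
  simp only [Pi.sub_apply, Pi.smul_apply, smul_eq_mul, mulVec_apply_of_blockDiagonal hΔ hθs,
    hθs, hys, sub_mulVec, smul_mulVec, one_mulVec]
  ring

end Blocks

end Matrix

theorem stmt18_general (M p : ℕ)
    (Sxx : Fin M → Matrix (Fin p) (Fin p) ℝ)
    (hSh : ∀ m, (Sxx m).IsHermitian)
    (κ₁ : ℝ) (hκ₁ : 0 < κ₁)
    (hlow : ∀ m, (Sxx m - κ₁ • (1 : Matrix (Fin p) (Fin p) ℝ)).PosSemidef)
    (W : Matrix (Fin M) (Fin M) ℝ)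
    (hWrow : ∀ i, ∑ j, W i j = 1)
    (α : ℝ) (hα : 0 < α)
    (Sxy : Fin M → Fin p → ℝ)
    (Sxxbar : Matrix (Fin p) (Fin p) ℝ) (hSxxbar : Sxxbar = (M : ℝ)⁻¹ • ∑ m, Sxx m)
    (Sxybar : Fin p → ℝ)
    (θols : Fin p → ℝ) (hθols : θols = Sxxbar⁻¹.mulVec Sxybar)
    (Δstar : Matrix (Fin M × Fin p) (Fin M × Fin p) ℝ)
    (hΔstar : ∀ m i m' i',
      Δstar (m, i) (m', i')
        = if m = m' then ((1 : Matrix (Fin p) (Fin p) ℝ) - α • Sxx m) i i' else 0)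
    (Wk : Matrix (Fin M × Fin p) (Fin M × Fin p) ℝ)
    (hWk : ∀ m i m' i', Wk (m, i) (m', i') = if i = i' then W m m' else 0)
    (θolsstar : Fin M × Fin p → ℝ) (hθolsstar : ∀ m i, θolsstar (m, i) = θols i)
    (Sxystar : Fin M × Fin p → ℝ) (hSxystar : ∀ m i, Sxystar (m, i) = Sxy m i)
    (r : Fin M × Fin p → ℝ)
    (hr : r = ((1 : Matrix (Fin M × Fin p) (Fin M × Fin p) ℝ) - Δstar * Wk).mulVec θolsstar
              - α • Sxystar) :
    Real.sqrt ((M : ℝ)⁻¹ * ∑ mi, (r mi) ^ 2)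
      ≤ α * (Real.sqrt ((M : ℝ)⁻¹ *
              ∑ m, Matrix.trace ((Sxx m - Sxxbar) * (Sxx m - Sxxbar)))
              * Real.sqrt (∑ i, (θols i) ^ 2)
            + Real.sqrt ((M : ℝ)⁻¹ * ∑ m, ∑ i, (Sxy m i - Sxybar i) ^ 2)) := by
  set u : Fin M × Fin p → ℝ := fun mi => ((Sxx mi.1 - Sxxbar) *ᵥ θols) mi.2
  set v : Fin M × Fin p → ℝ := fun mi => Sxy mi.1 mi.2 - Sxybar mi.2
  have hr_apply : ∀ mi, r mi = α * (u mi - v mi) := by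
    rintro ⟨m, i⟩
    have : Nonempty (Fin M) := ⟨m⟩
    have hSxxbar_pos : Sxxbar.PosDef :=
      hSxxbar ▸ PosDef.smul_sum_of_posSemidef_sub_smul_one hκ₁ (by simpa using m.pos) hlow
    have hnormal : Sxxbar *ᵥ θols = Sxybar := by
      rw [hθols, mulVec_mulVec,
        mul_nonsing_inv _ ((isUnit_iff_isUnit_det _).mp hSxxbar_pos.isUnit), one_mulVec]
    rw [hr, residual_block_apply hΔstar hWrow hWk hθolsstar hSxystar]
    simp only [u, v, sub_mulVec, Pi.sub_apply, hnormal]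
    ring
  have hD : ∀ m, (Sxx m - Sxxbar).IsHermitian := fun m => (hSh m).sub <| by
    rw [hSxxbar, isHermitian_iff_isSelfAdjoint]
    exact .smul (.all _) (isSelfAdjoint_sum _ fun k _ => (hSh k).isSelfAdjoint)
  have hu : ∑ mi, u mi ^ 2
      ≤ (∑ m, trace ((Sxx m - Sxxbar) * (Sxx m - Sxxbar))) * ∑ i, θols i ^ 2 := by
    rw [Fintype.sum_prod_type, Finset.sum_mul]
    exact Finset.sum_le_sum fun m _ => (hD m).trace_mul_self ▸ sum_sq_mulVec_le _ _
  calc √((M : ℝ)⁻¹ * ∑ mi, r mi ^ 2)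
      = α * √((M : ℝ)⁻¹ * ∑ mi, (u mi - v mi) ^ 2) := by
        simp only [hr_apply, mul_pow, ← Finset.mul_sum, mul_left_comm _ (α ^ 2)]
        rw [Real.sqrt_mul (sq_nonneg α), Real.sqrt_sq hα.le]
    _ ≤ α * (√((M : ℝ)⁻¹ * ∑ mi, u mi ^ 2) + √((M : ℝ)⁻¹ * ∑ mi, v mi ^ 2)) := by
        gcongr; exact Real.sqrt_mul_sum_sq_sub_le _ u v
    _ ≤ _ := by
        rw [← Real.sqrt_mul' _ (by positivity), mul_assoc]
        gcongr
        exact (Fintype.sum_prod_type _).le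

/-- Suppose `κ₁ I_p ⪯ Σ̂_xx^{(m)} ⪯ κ₂ I_p` (Loewner order) with `0 < κ₁ ≤ κ₂`, `W` is
doubly stochastic, and `0 < α < 2/κ₂`.  With `Δ* = diag(I_p − α Σ̂_xx^{(m)})`,
`θ̂_ols = Σ̂_xx⁻¹ Σ̂_xy` (where `Σ̂_xx, Σ̂_xy` are the client averages),
`θ̂*_ols = 𝟏_M ⊗ θ̂_ols`, the residual `r = (I − Δ*(W ⊗ I_p)) θ̂*_ols − α Σ̂*_xy`
satisfies `M^{-1/2}‖r‖ ≤ α (SE(Σ̂_xx)‖θ̂_ols‖ + SE(Σ̂_xy))`, where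
`SE²(Σ̂_xx) = tr[M⁻¹ ∑ₘ (Σ̂^{(m)}_xx − Σ̂_xx)²]` and
`SE²(Σ̂_xy) = M⁻¹ ∑ₘ ‖Σ̂^{(m)}_xy − Σ̂_xy‖²`. -/
theorem stmt18 (M p : ℕ)
    (Sxx : Fin M → Matrix (Fin p) (Fin p) ℝ)
    (hSh : ∀ m, (Sxx m).IsHermitian)
    (κ₁ κ₂ : ℝ) (hκ₁ : 0 < κ₁) (hκ₁₂ : κ₁ ≤ κ₂)
    (hlow : ∀ m, (Sxx m - κ₁ • (1 : Matrix (Fin p) (Fin p) ℝ)).PosSemidef)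
    (hup : ∀ m, (κ₂ • (1 : Matrix (Fin p) (Fin p) ℝ) - Sxx m).PosSemidef)
    (W : Matrix (Fin M) (Fin M) ℝ)
    (hWnn : ∀ i j, 0 ≤ W i j) (hWrow : ∀ i, ∑ j, W i j = 1)
    (hWcol : ∀ j, ∑ i, W i j = 1)
    (α : ℝ) (hα : 0 < α) (hακ : α * κ₂ < 2)
    (Sxy : Fin M → Fin p → ℝ)
    (Sxxbar : Matrix (Fin p) (Fin p) ℝ) (hSxxbar : Sxxbar = (M : ℝ)⁻¹ • ∑ m, Sxx m)
    (Sxybar : Fin p → ℝ) (hSxybar : Sxybar = (M : ℝ)⁻¹ • ∑ m, Sxy m)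
    (θols : Fin p → ℝ) (hθols : θols = Sxxbar⁻¹.mulVec Sxybar)
    (Δstar : Matrix (Fin M × Fin p) (Fin M × Fin p) ℝ)
    (hΔstar : ∀ m i m' i',
      Δstar (m, i) (m', i')
        = if m = m' then ((1 : Matrix (Fin p) (Fin p) ℝ) - α • Sxx m) i i' else 0)
    (Wk : Matrix (Fin M × Fin p) (Fin M × Fin p) ℝ)
    (hWk : ∀ m i m' i', Wk (m, i) (m', i') = if i = i' then W m m' else 0)
    (θolsstar : Fin M × Fin p → ℝ) (hθolsstar : ∀ m i, θolsstar (m, i) = θols i)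
    (Sxystar : Fin M × Fin p → ℝ) (hSxystar : ∀ m i, Sxystar (m, i) = Sxy m i)
    (r : Fin M × Fin p → ℝ)
    (hr : r = ((1 : Matrix (Fin M × Fin p) (Fin M × Fin p) ℝ) - Δstar * Wk).mulVec θolsstar
              - α • Sxystar) :
    Real.sqrt ((M : ℝ)⁻¹ * ∑ mi, (r mi) ^ 2)
      ≤ α * (Real.sqrt ((M : ℝ)⁻¹ *
              ∑ m, Matrix.trace ((Sxx m - Sxxbar) * (Sxx m - Sxxbar)))
              * Real.sqrt (∑ i, (θols i) ^ 2)
            + Real.sqrt ((M : ℝ)⁻¹ * ∑ m, ∑ i, (Sxy m i - Sxybar i) ^ 2)) :=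
  stmt18_general M p Sxx hSh κ₁ hκ₁ hlow W hWrow α hα Sxy Sxxbar hSxxbar Sxybar θols hθols Δstar
    hΔstar Wk hWk θolsstar hθolsstar Sxystar hSxystar r hr
end
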